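/- arXiv:1410.1174 — 4 statements merged into one kernel-verified Lean document; each statement's English description precedes it below -/
import Mathlib

section
/- Let A ∈ ℝ^{n×p}, η ≥ 0, and 1 ≤ m ≤ np. Define B̂ by b̂_{ij} = a_{ij}/(1+η) if |a_{ij}| is among the m largest absolute values of entries of A, and b̂_{ij} = 0 otherwise. Then B̂ is a global minimizer of B ↦ (1/2)‖A-B‖_F² + (η/2)‖B‖_F² subject to B having at most m nonzero entries. -/
/-!
Entrywise, `(1/2)(a - b)² + (η/2) b²` equals `a²/2` at `b = 0` and is at least
`a²/2 - a²/(2(1+η))` otherwise, with equality at `b = a/(1+η)`. So the objective of a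
matrix supported on `T` is at least `‖A‖²/2 - (∑_{q ∈ T} a_q²)/(2(1+η))`, with equality
for `B̂` and `T = S`. Among supports of size at most `m`, the sum `∑_{q ∈ T} a_q²` is largest
on the `m` entries of largest modulus, which is `S`.
-/

open Finset

theorem Finset.sum_le_sum_of_selects_largest {ι M : Type*} [DecidableEq ι] [AddCommMonoid M]
    [LinearOrder M] [IsOrderedAddMonoid M] {f : ι → M} (hf : ∀ i, 0 ≤ f i) {S T : Finset ι}
    (hcard : #T ≤ #S) (hS : ∀ i ∈ S, ∀ j ∉ S, f j ≤ f i) :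
    ∑ j ∈ T, f j ≤ ∑ i ∈ S, f i := by
  rw [← sum_inter_add_sum_sdiff T S, ← sum_inter_add_sum_sdiff S T, inter_comm T S]
  refine add_le_add le_rfl ?_
  have hcard_sdiff : #(T \ S) ≤ #(S \ T) := by
    have := card_sdiff_add_card_inter T S
    have := card_sdiff_add_card_inter S T
    rw [inter_comm] at this
    omega
  rcases (S \ T).eq_empty_or_nonempty with hST | hST
  · rw [hST, card_empty, Nat.le_zero, card_eq_zero] at hcard_sdiff
    rw [hST, hcard_sdiff]
  obtain ⟨i₀, hi₀, hmin⟩ := exists_min_image _ f hST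
  calc ∑ j ∈ T \ S, f j
      ≤ #(T \ S) • f i₀ := sum_le_card_nsmul _ _ _ fun j hj ↦
        hS i₀ (mem_sdiff.1 hi₀).1 j (mem_sdiff.1 hj).2
    _ ≤ #(S \ T) • f i₀ := nsmul_le_nsmul_left (hf i₀) hcard_sdiff
    _ ≤ ∑ i ∈ S \ T, f i := card_nsmul_le_sum _ _ _ hmin

noncomputable def penalizedSqLoss (η a b : ℝ) : ℝ := (1 / 2) * (a - b) ^ 2 + (η / 2) * b ^ 2

lemma penalizedSqLoss_zero (η a : ℝ) : penalizedSqLoss η a 0 = a ^ 2 / 2 := by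
  simp only [penalizedSqLoss]
  ring

lemma penalizedSqLoss_shrink {η : ℝ} (hη : 1 + η ≠ 0) (a : ℝ) :
    penalizedSqLoss η a (a / (1 + η)) = a ^ 2 / 2 - a ^ 2 / (2 * (1 + η)) := by
  simp only [penalizedSqLoss]
  field_simp
  ring

lemma le_penalizedSqLoss {η : ℝ} (hη : 0 < 1 + η) (a b : ℝ) :
    a ^ 2 / 2 - a ^ 2 / (2 * (1 + η)) ≤ penalizedSqLoss η a b := by
  have hsq : penalizedSqLoss η a b - (a ^ 2 / 2 - a ^ 2 / (2 * (1 + η))) =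
      ((1 + η) * b - a) ^ 2 / (2 * (1 + η)) := by
    simp only [penalizedSqLoss]
    field_simp
    ring
  have : 0 ≤ ((1 + η) * b - a) ^ 2 / (2 * (1 + η)) := by positivity
  linarith

section Sums

variable {ι : Type*} [Fintype ι] {η : ℝ}

lemma sum_penalizedSqLoss_shrink [DecidableEq ι] (hη : 1 + η ≠ 0) (a : ι → ℝ) (S : Finset ι) :
    ∑ i, penalizedSqLoss η (a i) (if i ∈ S then a i / (1 + η) else 0) =
      ∑ i, a i ^ 2 / 2 - (∑ i ∈ S, a i ^ 2) / (2 * (1 + η)) := by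
  rw [sum_div, ← Fintype.sum_ite_mem S, ← sum_sub_distrib]
  refine sum_congr rfl fun i _ ↦ ?_
  split_ifs
  · exact penalizedSqLoss_shrink hη (a i)
  · rw [penalizedSqLoss_zero, sub_zero]

lemma sum_sq_half_sub_le_sum_penalizedSqLoss (hη : 0 < 1 + η) (a b : ι → ℝ) :
    ∑ i, a i ^ 2 / 2 - (∑ i with b i ≠ 0, a i ^ 2) / (2 * (1 + η)) ≤
      ∑ i, penalizedSqLoss η (a i) (b i) := by
  rw [sum_div, sum_filter, ← sum_sub_distrib]
  refine sum_le_sum fun i _ ↦ ?_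
  by_cases hb : b i = 0
  · simp [hb, penalizedSqLoss_zero]
  · simpa [hb] using le_penalizedSqLoss hη (a i) (b i)

theorem sum_penalizedSqLoss_shrink_le [DecidableEq ι] (hη : 0 < 1 + η) {a b : ι → ℝ}
    {S : Finset ι} (hcard : #{i | b i ≠ 0} ≤ #S) (hS : ∀ i ∈ S, ∀ j ∉ S, |a j| ≤ |a i|) :
    ∑ i, penalizedSqLoss η (a i) (if i ∈ S then a i / (1 + η) else 0) ≤
      ∑ i, penalizedSqLoss η (a i) (b i) := by
  have hsupp : ∑ i with b i ≠ 0, a i ^ 2 ≤ ∑ i ∈ S, a i ^ 2 :=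
    sum_le_sum_of_selects_largest (fun _ ↦ sq_nonneg _) hcard
      fun i hi j hj ↦ sq_le_sq.2 (hS i hi j hj)
  calc _ = ∑ i, a i ^ 2 / 2 - (∑ i ∈ S, a i ^ 2) / (2 * (1 + η)) :=
        sum_penalizedSqLoss_shrink hη.ne' a S
    _ ≤ ∑ i, a i ^ 2 / 2 - (∑ i with b i ≠ 0, a i ^ 2) / (2 * (1 + η)) := by gcongr
    _ ≤ _ := sum_sq_half_sub_le_sum_penalizedSqLoss hη a b

lemma objective_eq_sum_penalizedSqLoss {κ : Type*} [Fintype κ] (A B : Matrix ι κ ℝ) :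
    (1 / 2) * (∑ i, ∑ j, (A i j - B i j) ^ 2) + (η / 2) * (∑ i, ∑ j, (B i j) ^ 2) =
      ∑ q : ι × κ, penalizedSqLoss η (A q.1 q.2) (B q.1 q.2) := by
  simp only [penalizedSqLoss, Fintype.sum_prod_type, mul_sum, sum_add_distrib]

end Sums

open scoped Classical

theorem stmt_4_general {n p : ℕ} (A : Matrix (Fin n) (Fin p) ℝ) (η : ℝ) (hη : 0 ≤ η)
    (m : ℕ)
    (S : Finset (Fin n × Fin p)) (hScard : S.card = m)
    (hSel : ∀ q ∈ S, ∀ r ∉ S, |A r.1 r.2| ≤ |A q.1 q.2|)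
    (Bhat : Matrix (Fin n) (Fin p) ℝ)
    (hBhat : ∀ i j, Bhat i j = if (i, j) ∈ S then A i j / (1 + η) else 0) :
    ∀ B : Matrix (Fin n) (Fin p) ℝ,
      (Finset.univ.filter fun q : Fin n × Fin p => B q.1 q.2 ≠ 0).card ≤ m →
        (1 / 2) * (∑ i, ∑ j, (A i j - Bhat i j) ^ 2) +
            (η / 2) * (∑ i, ∑ j, (Bhat i j) ^ 2) ≤
          (1 / 2) * (∑ i, ∑ j, (A i j - B i j) ^ 2) +
            (η / 2) * (∑ i, ∑ j, (B i j) ^ 2) := by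
  intro B hB
  rw [objective_eq_sum_penalizedSqLoss, objective_eq_sum_penalizedSqLoss]
  simp only [hBhat]
  exact sum_penalizedSqLoss_shrink_le (a := fun q : Fin n × Fin p ↦ A q.1 q.2) (by linarith)
    (hB.trans hScard.ge) hSel

theorem stmt_4 {n p : ℕ} (A : Matrix (Fin n) (Fin p) ℝ) (η : ℝ) (hη : 0 ≤ η)
    (m : ℕ) (hm1 : 1 ≤ m) (hm2 : m ≤ n * p)
    (S : Finset (Fin n × Fin p)) (hScard : S.card = m)
    (hSel : ∀ q ∈ S, ∀ r ∉ S, |A r.1 r.2| ≤ |A q.1 q.2|)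
    (Bhat : Matrix (Fin n) (Fin p) ℝ)
    (hBhat : ∀ i j, Bhat i j = if (i, j) ∈ S then A i j / (1 + η) else 0) :
    ∀ B : Matrix (Fin n) (Fin p) ℝ,
      (Finset.univ.filter fun q : Fin n × Fin p => B q.1 q.2 ≠ 0).card ≤ m →
        (1 / 2) * (∑ i, ∑ j, (A i j - Bhat i j) ^ 2) +
            (η / 2) * (∑ i, ∑ j, (Bhat i j) ^ 2) ≤
          (1 / 2) * (∑ i, ∑ j, (A i j - B i j) ^ 2) +
            (η / 2) * (∑ i, ∑ j, (B i j) ^ 2) :=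
  stmt_4_general A η hη m S hScard hSel Bhat hBhat
end

section
/- For any x, x* ∈ ℝⁿ with f(x) = Lπ(Ax+u) - Dx + c and f(x*) = 0, there exists a diagonal matrix G with 0 ⪯ G ⪯ (1/4)I such that f(x) = -(D - L G A)(x - x*). -/
/-!
By the mean value theorem every difference quotient of the sigmoid is a value of its derivative
`σ (1 - σ)`, which lies in `[0, 1/4]` because `0 ≤ σ ≤ 1`. Taking `gᵢ` to be the difference
quotient at the `i`-th coordinates of `A x + u` and `A x* + u`, and subtracting the equation
`f(x*) = 0`, gives the claimed identity coordinatewise.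
-/

/-- The sigmoid function. -/
noncomputable def sig (θ : ℝ) : ℝ := 1 / (1 + Real.exp (-θ))

open Set

theorem sig_eq_sigmoid : sig = Real.sigmoid := by
  funext θ
  rw [sig, one_div, Real.sigmoid_def]

theorem exists_mem_sub_eq_mul_sub_of_hasDerivAt {f f' : ℝ → ℝ} {K : Set ℝ}
    (hf : ∀ x, HasDerivAt f (f' x) x) (hK : ∀ x, f' x ∈ K) (s t : ℝ) :
    ∃ g ∈ K, f s - f t = g * (s - t) := by
  have of_lt : ∀ a b, a < b → ∃ g ∈ K, f b - f a = g * (b - a) := fun a b hab => by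
    obtain ⟨θ, -, hθ⟩ := exists_hasDerivAt_eq_slope f f' hab
      (fun x _ => (hf x).continuousAt.continuousWithinAt) (fun x _ => hf x)
    exact ⟨f' θ, hK θ, by rw [hθ, div_mul_cancel₀ _ (sub_ne_zero.mpr hab.ne')]⟩
  rcases lt_trichotomy s t with hst | rfl | hts
  · obtain ⟨g, hgK, hg⟩ := of_lt s t hst
    exact ⟨g, hgK, by linear_combination -hg⟩
  · exact ⟨f' s, hK s, by ring⟩
  · exact of_lt t s hts

theorem mul_one_sub_mem_Icc {p : ℝ} (hp : p ∈ Icc (0 : ℝ) 1) : p * (1 - p) ∈ Icc (0 : ℝ) (1 / 4) :=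
  ⟨mul_nonneg hp.1 (sub_nonneg.mpr hp.2), by nlinarith [sq_nonneg (p - 1 / 2)]⟩

theorem Real.exists_sigmoid_sub_eq_mul_sub (s t : ℝ) :
    ∃ g ∈ Icc (0 : ℝ) (1 / 4), sigmoid s - sigmoid t = g * (s - t) :=
  exists_mem_sub_eq_mul_sub_of_hasDerivAt hasDerivAt_sigmoid
    (fun θ => mul_one_sub_mem_Icc ⟨sigmoid_nonneg θ, sigmoid_le_one θ⟩) s t

theorem stmt_7 {n : ℕ} (A : Matrix (Fin n) (Fin n) ℝ) (l d u c : Fin n → ℝ)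
    (x xs : Fin n → ℝ)
    (hxs : ∀ i, l i * sig ((A.mulVec xs) i + u i) - d i * xs i + c i = 0) :
    ∃ g : Fin n → ℝ, (∀ i, 0 ≤ g i ∧ g i ≤ 1 / 4) ∧
      ∀ i, l i * sig ((A.mulVec x) i + u i) - d i * x i + c i =
        -(d i * (x i - xs i) - l i * g i * (A.mulVec (fun j => x j - xs j)) i) := by
  choose g hg hslope using fun i =>
    Real.exists_sigmoid_sub_eq_mul_sub ((A.mulVec x) i + u i) ((A.mulVec xs) i + u i)
  refine ⟨g, hg, fun i => ?_⟩
  have hA : A.mulVec (fun j => x j - xs j) i = A.mulVec x i - A.mulVec xs i :=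
    congrFun (A.mulVec_sub x xs) i
  rw [sig_eq_sigmoid] at hxs ⊢
  rw [hA]
  linear_combination l i * hslope i + hxs i
end

section
/- Let S be a real symmetric n×n matrix with spectral decomposition S = U diag(s₁,…,sₙ) Uᵀ. Then the matrix S₋ = U diag(min(sᵢ,0)) Uᵀ is the (unique) minimizer of ‖C - S‖_F over symmetric negative semidefinite matrices C. -/
/-!
Conjugating by the orthogonal matrix `U` preserves the sum of squared entries, so in the
eigenbasis the problem becomes: approximate `diagonal s` by a matrix `B = Uᵀ C U` whose
diagonal is nonpositive (because `-C` is positive semidefinite). Off the diagonal the best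
choice is `0`, on the diagonal it is the scalar projection `min (s i) 0`, and in fact every
entry satisfies the Pythagorean inequality of a projection onto a convex set,
`‖S₋ - S‖² + ‖C - S₋‖² ≤ ‖C - S‖²`, which gives minimality and uniqueness at once.
-/

open Matrix

section SumSqEntries

variable {m n p q : Type*} [Fintype m] [Fintype n] [Fintype p] [Fintype q]

lemma sum_sq_entries_eq_trace (M : Matrix m n ℝ) :
    ∑ i, ∑ j, M i j ^ 2 = (Mᵀ * M).trace := by
  simp only [trace, diag, mul_apply, transpose_apply, sq]
  rw [Finset.sum_comm]

lemma sum_sq_entries_eq_zero_iff (M : Matrix m n ℝ) :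
    ∑ i, ∑ j, M i j ^ 2 = 0 ↔ M = 0 := by
  rw [sum_sq_entries_eq_trace, ← conjTranspose_eq_transpose_of_trivial,
    trace_conjTranspose_mul_self_eq_zero_iff]

lemma sum_sq_entries_mul_mul_transpose [DecidableEq n] [DecidableEq p]
    {U : Matrix m n ℝ} {V : Matrix q p ℝ} (hU : Uᵀ * U = 1) (hV : Vᵀ * V = 1)
    (M : Matrix n p ℝ) :
    ∑ i, ∑ j, (U * M * Vᵀ) i j ^ 2 = ∑ i, ∑ j, M i j ^ 2 := by
  have hconj : (U * M * Vᵀ)ᵀ * (U * M * Vᵀ) = V * (Mᵀ * M) * Vᵀ := by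
    simp only [transpose_mul, transpose_transpose, Matrix.mul_assoc]
    rw [← Matrix.mul_assoc Uᵀ, hU, Matrix.one_mul]
  rw [sum_sq_entries_eq_trace, sum_sq_entries_eq_trace, hconj, trace_mul_comm,
    ← Matrix.mul_assoc, hV, Matrix.one_mul]

end SumSqEntries

lemma sq_min_zero_sub_add_sq_sub_min_zero_le {a b : ℝ} (hb : b ≤ 0) :
    (min a 0 - a) ^ 2 + (b - min a 0) ^ 2 ≤ (b - a) ^ 2 := by
  rcases le_or_gt a 0 with ha | ha
  · simp [min_eq_left ha]
  · rw [min_eq_right ha.le]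
    nlinarith

variable {n : Type*} [Fintype n]

lemma diag_nonpos_transpose_mul_mul_self {C : Matrix n n ℝ} (hC : (-C).PosSemidef)
    (U : Matrix n n ℝ) (i : n) : (Uᵀ * C * U) i i ≤ 0 := by
  have hB : (Uᵀ * -C * U).PosSemidef := by
    simpa only [conjTranspose_eq_transpose_of_trivial] using hC.conjTranspose_mul_mul_same U
  simpa only [Matrix.mul_neg, Matrix.neg_mul, Matrix.neg_apply, neg_nonneg] using
    hB.diag_nonneg (i := i)

variable [DecidableEq n]

lemma sum_sq_diagonal_min_zero_add_le (s : n → ℝ) {B : Matrix n n ℝ} (hB : ∀ i, B i i ≤ 0) :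
    ∑ i, ∑ j, (diagonal (fun i => min (s i) 0) - diagonal s) i j ^ 2 +
        ∑ i, ∑ j, (B - diagonal (fun i => min (s i) 0)) i j ^ 2 ≤
      ∑ i, ∑ j, (B - diagonal s) i j ^ 2 := by
  simp only [← Finset.sum_add_distrib]
  refine Finset.sum_le_sum fun i _ => Finset.sum_le_sum fun j _ => ?_
  rcases eq_or_ne i j with rfl | hij
  · simpa only [Matrix.sub_apply, diagonal_apply_eq] using
      sq_min_zero_sub_add_sq_sub_min_zero_le (hB i)
  · simp [diagonal_apply_ne _ hij]

lemma sum_sq_min_zero_conj_add_le {U : Matrix n n ℝ} (hU : U * Uᵀ = 1) (s : n → ℝ)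
    {C : Matrix n n ℝ} (hC : (-C).PosSemidef) :
    ∑ i, ∑ j, (U * diagonal (fun i => min (s i) 0) * Uᵀ - U * diagonal s * Uᵀ) i j ^ 2 +
        ∑ i, ∑ j, (C - U * diagonal (fun i => min (s i) 0) * Uᵀ) i j ^ 2 ≤
      ∑ i, ∑ j, (C - U * diagonal s * Uᵀ) i j ^ 2 := by
  have hUtU : Uᵀ * U = 1 := mul_eq_one_comm.mp hU
  set B := Uᵀ * C * U
  have hCB : C = U * B * Uᵀ := by
    rw [← Matrix.mul_assoc, ← Matrix.mul_assoc, hU, Matrix.one_mul, Matrix.mul_assoc, hU,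
      Matrix.mul_one]
  have hconj (X Y : Matrix n n ℝ) :
      ∑ i, ∑ j, (U * X * Uᵀ - U * Y * Uᵀ) i j ^ 2 = ∑ i, ∑ j, (X - Y) i j ^ 2 := by
    rw [← Matrix.sub_mul, ← Matrix.mul_sub, sum_sq_entries_mul_mul_transpose hUtU hUtU]
  rw [hCB, hconj, hconj, hconj]
  exact sum_sq_diagonal_min_zero_add_le s (diag_nonpos_transpose_mul_mul_self hC U)

theorem stmt_14_general {n : ℕ} (S U : Matrix (Fin n) (Fin n) ℝ) (s : Fin n → ℝ)
    (hU : U * Uᵀ = 1) (hUS : S = U * Matrix.diagonal s * Uᵀ)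
    (Sm : Matrix (Fin n) (Fin n) ℝ)
    (hSm : Sm = U * Matrix.diagonal (fun i => min (s i) 0) * Uᵀ) :
    Sm.IsSymm ∧ (-Sm).PosSemidef ∧
      ∀ C : Matrix (Fin n) (Fin n) ℝ, C.IsSymm → (-C).PosSemidef →
        (∑ i, ∑ j, (Sm i j - S i j) ^ 2 ≤ ∑ i, ∑ j, (C i j - S i j) ^ 2) ∧
          (∑ i, ∑ j, (C i j - S i j) ^ 2 = ∑ i, ∑ j, (Sm i j - S i j) ^ 2 →
            C = Sm) := by
  subst hUS hSm
  refine ⟨?_, ?_, fun C _ hC => ?_⟩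
  · simp [IsSymm, transpose_mul, Matrix.mul_assoc]
  · have hd : (diagonal fun i => -min (s i) 0).PosSemidef :=
      posSemidef_diagonal_iff.mpr fun i => neg_nonneg.mpr (min_le_right _ _)
    simpa [← diagonal_neg, conjTranspose_eq_transpose_of_trivial] using
      hd.mul_mul_conjTranspose_same U
  · have hpyth := sum_sq_min_zero_conj_add_le hU s hC
    have hnonneg : 0 ≤ ∑ i, ∑ j, (C - U * diagonal (fun i => min (s i) 0) * Uᵀ) i j ^ 2 :=
      Fintype.sum_nonneg fun i => Fintype.sum_nonneg fun j => sq_nonneg _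
    simp only [Matrix.sub_apply] at hpyth hnonneg ⊢
    refine ⟨by linarith, fun heq => ?_⟩
    rw [← sub_eq_zero, ← sum_sq_entries_eq_zero_iff]
    simp only [Matrix.sub_apply]
    linarith

theorem stmt_14 {n : ℕ} (S U : Matrix (Fin n) (Fin n) ℝ) (s : Fin n → ℝ)
    (hS : S.IsSymm) (hU : U * Uᵀ = 1) (hUS : S = U * Matrix.diagonal s * Uᵀ)
    (Sm : Matrix (Fin n) (Fin n) ℝ)
    (hSm : Sm = U * Matrix.diagonal (fun i => min (s i) 0) * Uᵀ) :
    Sm.IsSymm ∧ (-Sm).PosSemidef ∧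
      ∀ C : Matrix (Fin n) (Fin n) ℝ, C.IsSymm → (-C).PosSemidef →
        (∑ i, ∑ j, (Sm i j - S i j) ^ 2 ≤ ∑ i, ∑ j, (C i j - S i j) ^ 2) ∧
          (∑ i, ∑ j, (C i j - S i j) ^ 2 = ∑ i, ∑ j, (Sm i j - S i j) ^ 2 →
            C = Sm) :=
  stmt_14_general S U s hU hUS Sm hSm
end

section
/- Let L = diag(l₁,…,lₙ) and let Ψ = Φ_B + ((Φ_C + Φ_Cᵀ)/2) L for given n×n matrices Φ_B, Φ_C. Define B* by b*_{ij} = ψ_{ij}(2+lᵢ²)/(2+lᵢ²+l_j²) - ψ_{ji} lᵢ l_j/(2+lᵢ²+l_j²), and C* = (L B*ᵀ + B* L)/2. Then (B*, C*) is a global minimizer of (1/2)‖B - Φ_B‖_F² + (1/2)‖C - Φ_C‖_F² subject to the linear constraint C = (L Bᵀ + B L)/2. -/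
/-!
Substituting the constraint, the objective becomes the convex quadratic
`f B = ½‖B - Φ_B‖² + ½‖S B - Φ_C‖²` with `S B = (L Bᵀ + B L)/2`, the symmetric part of `B L`.
Expanding around `B*` gives `f B = f B* + ⟨B - B*, ∇f B*⟩ + (nonnegative squares)`, and
`∇f B* = B* + S(B*) L - Ψ`, because the Frobenius adjoint of `S` is `G ↦ ((G + Gᵀ)/2) L` and
`S(B*)` is symmetric.
The formula for `B*` solves, for each pair `{i, j}`, the `2 × 2` linear system expressing
`∇f B* = 0`, so the first-order term vanishes.
-/

open Matrix Finset

lemma sum_sum_sq_sub_eq {m n : Type*} [Fintype m] [Fintype n] (X Y P : Matrix m n ℝ) :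
    ∑ i, ∑ j, (X i j - P i j) ^ 2 =
      ∑ i, ∑ j, (Y i j - P i j) ^ 2 + ∑ i, ∑ j, (X i j - Y i j) ^ 2 +
        2 * ∑ i, ∑ j, (X i j - Y i j) * (Y i j - P i j) := by
  simp only [mul_sum, ← sum_add_distrib]
  exact sum_congr rfl fun i _ => sum_congr rfl fun j _ => by ring

lemma half_sum_sq_add_half_sum_sq_le {m n p q : Type*} [Fintype m] [Fintype n] [Fintype p]
    [Fintype q] (B₀ B P : Matrix m n ℝ) (C₀ C Q : Matrix p q ℝ)
    (h : ∑ i, ∑ j, (B i j - B₀ i j) * (B₀ i j - P i j) +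
      ∑ i, ∑ j, (C i j - C₀ i j) * (C₀ i j - Q i j) = 0) :
    (1 / 2) * (∑ i, ∑ j, (B₀ i j - P i j) ^ 2) + (1 / 2) * (∑ i, ∑ j, (C₀ i j - Q i j) ^ 2) ≤
      (1 / 2) * (∑ i, ∑ j, (B i j - P i j) ^ 2) + (1 / 2) * (∑ i, ∑ j, (C i j - Q i j) ^ 2) := by
  rw [sum_sum_sq_sub_eq B B₀ P, sum_sum_sq_sub_eq C C₀ Q]
  have hB : 0 ≤ ∑ i, ∑ j, (B i j - B₀ i j) ^ 2 := by positivity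
  have hC : 0 ≤ ∑ i, ∑ j, (C i j - C₀ i j) ^ 2 := by positivity
  linarith

section symmMulDiagonal

variable {n : Type*} [Fintype n] [DecidableEq n]

noncomputable def symmMulDiagonal (l : n → ℝ) (B : Matrix n n ℝ) : Matrix n n ℝ :=
  (1 / 2 : ℝ) • (diagonal l * Bᵀ + B * diagonal l)

lemma symmMulDiagonal_apply (l : n → ℝ) (B : Matrix n n ℝ) (i j : n) :
    symmMulDiagonal l B i j = (l i * B j i + B i j * l j) / 2 := by
  simp only [symmMulDiagonal, Matrix.smul_apply, Matrix.add_apply, diagonal_mul, mul_diagonal,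
    transpose_apply, smul_eq_mul]
  ring

lemma symmMulDiagonal_apply_comm (l : n → ℝ) (B : Matrix n n ℝ) (i j : n) :
    symmMulDiagonal l B i j = symmMulDiagonal l B j i := by
  rw [symmMulDiagonal_apply, symmMulDiagonal_apply]
  ring

lemma symmMulDiagonal_sub (l : n → ℝ) (B B' : Matrix n n ℝ) :
    symmMulDiagonal l (B - B') = symmMulDiagonal l B - symmMulDiagonal l B' := by
  ext i j
  simp only [symmMulDiagonal_apply, Matrix.sub_apply]
  ring

lemma sum_sum_symmMulDiagonal_mul (l : n → ℝ) (D G : Matrix n n ℝ) :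
    ∑ i, ∑ j, symmMulDiagonal l D i j * G i j =
      ∑ i, ∑ j, D i j * ((G i j + G j i) / 2 * l j) := by
  have hswap : ∑ i, ∑ j, l i * D j i * G i j / 2 = ∑ i, ∑ j, D i j * (G j i * l j) / 2 := by
    rw [sum_comm]
    exact sum_congr rfl fun i _ => sum_congr rfl fun j _ => by ring
  calc ∑ i, ∑ j, symmMulDiagonal l D i j * G i j
      = ∑ i, ∑ j, (l i * D j i * G i j / 2 + D i j * (G i j * l j) / 2) := by
        simp only [symmMulDiagonal_apply]
        exact sum_congr rfl fun i _ => sum_congr rfl fun j _ => by ring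
    _ = ∑ i, ∑ j, (D i j * (G j i * l j) / 2 + D i j * (G i j * l j) / 2) := by
        simp only [sum_add_distrib, hswap]
    _ = ∑ i, ∑ j, D i j * ((G i j + G j i) / 2 * l j) :=
        sum_congr rfl fun i _ => sum_congr rfl fun j _ => by ring

lemma first_variation_eq (l : n → ℝ) (B₀ B ΦB ΦC : Matrix n n ℝ) :
    ∑ i, ∑ j, (B i j - B₀ i j) * (B₀ i j - ΦB i j) +
      ∑ i, ∑ j, (symmMulDiagonal l B i j - symmMulDiagonal l B₀ i j) *
        (symmMulDiagonal l B₀ i j - ΦC i j) =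
    ∑ i, ∑ j, (B i j - B₀ i j) *
      (B₀ + symmMulDiagonal l B₀ * diagonal l -
        (ΦB + ((1 / 2 : ℝ) • (ΦC + ΦCᵀ)) * diagonal l)) i j := by
  have hS := sum_sum_symmMulDiagonal_mul l (B - B₀) (symmMulDiagonal l B₀ - ΦC)
  simp only [symmMulDiagonal_sub, Matrix.sub_apply] at hS
  rw [hS, ← sum_add_distrib]
  refine sum_congr rfl fun i _ => ?_
  rw [← sum_add_distrib]
  refine sum_congr rfl fun j _ => ?_
  simp only [Matrix.sub_apply, Matrix.add_apply, mul_diagonal, Matrix.smul_apply, transpose_apply,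
    smul_eq_mul]
  rw [symmMulDiagonal_apply_comm l B₀ j i]
  ring

/-- The normal equation `B + S(B) L = Ψ` of the problem decouples into `2 × 2` linear systems in
`(B i j, B j i)`, with determinant `(2 + l i²)(2 + l j²) - l i² l j² = 2(2 + l i² + l j²)`. -/
lemma add_symmMulDiagonal_mul_diagonal_eq (l : n → ℝ) (Ψ B : Matrix n n ℝ)
    (hB : ∀ i j, B i j =
      Ψ i j * (2 + (l i) ^ 2) / (2 + (l i) ^ 2 + (l j) ^ 2) -
        Ψ j i * (l i * l j) / (2 + (l i) ^ 2 + (l j) ^ 2)) :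
    B + symmMulDiagonal l B * diagonal l = Ψ := by
  ext i j
  have hij : 2 + l i ^ 2 + l j ^ 2 ≠ 0 := by positivity
  have hji : 2 + l j ^ 2 + l i ^ 2 ≠ 0 := by positivity
  rw [Matrix.add_apply, mul_diagonal, symmMulDiagonal_apply, hB i j, hB j i]
  field_simp
  ring

end symmMulDiagonal

theorem stmt_16 {n : ℕ} (l : Fin n → ℝ) (ΦB ΦC : Matrix (Fin n) (Fin n) ℝ)
    (L : Matrix (Fin n) (Fin n) ℝ) (hL : L = Matrix.diagonal l)
    (Ψ : Matrix (Fin n) (Fin n) ℝ) (hΨ : Ψ = ΦB + ((1 / 2 : ℝ) • (ΦC + ΦCᵀ)) * L)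
    (Bstar Cstar : Matrix (Fin n) (Fin n) ℝ)
    (hBstar : ∀ i j, Bstar i j =
      Ψ i j * (2 + (l i) ^ 2) / (2 + (l i) ^ 2 + (l j) ^ 2) -
        Ψ j i * (l i * l j) / (2 + (l i) ^ 2 + (l j) ^ 2))
    (hCstar : Cstar = (1 / 2 : ℝ) • (L * Bstarᵀ + Bstar * L)) :
    ∀ B C : Matrix (Fin n) (Fin n) ℝ, C = (1 / 2 : ℝ) • (L * Bᵀ + B * L) →
      (1 / 2) * (∑ i, ∑ j, (Bstar i j - ΦB i j) ^ 2) +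
          (1 / 2) * (∑ i, ∑ j, (Cstar i j - ΦC i j) ^ 2) ≤
        (1 / 2) * (∑ i, ∑ j, (B i j - ΦB i j) ^ 2) +
          (1 / 2) * (∑ i, ∑ j, (C i j - ΦC i j) ^ 2) := by
  rintro B C rfl
  subst hL hCstar
  have hgrad : Bstar + symmMulDiagonal l Bstar * diagonal l -
      (ΦB + ((1 / 2 : ℝ) • (ΦC + ΦCᵀ)) * diagonal l) = 0 := by
    rw [← hΨ, add_symmMulDiagonal_mul_diagonal_eq l Ψ Bstar hBstar, sub_self]
  refine half_sum_sq_add_half_sum_sq_le _ _ _ _ _ _ ?_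
  refine (first_variation_eq l Bstar B ΦB ΦC).trans ?_
  simp only [hgrad, Matrix.zero_apply, mul_zero, sum_const_zero]
end
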